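/- Let G be a brick (a 3-connected graph such that G − x − y has a perfect matching for every pair of distinct vertices x, y). Then every barrier of G consists of a single vertex. -/

import Mathlib

open SimpleGraph Set

universe u
variable {V : Type u}

/-- Number of odd components of a graph. -/
noncomputable def oddComps (G : SimpleGraph V) : ℕ :=
  Nat.card {c : G.ConnectedComponent // Odd (Nat.card c.supp)}

/-- `S` is a barrier of `G`: the number of odd components of `G − S` equals `|S|`. -/
def IsBarrier (G : SimpleGraph V) (S : Set V) : Prop :=
  oddComps (G.induce Sᶜ) = S.ncard

/-- `G` has a perfect matching. -/
def HasPM (G : SimpleGraph V) : Prop :=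
  ∃ M : Subgraph G, M.IsPerfectMatching

/-- `G` is matching covered. -/
def MatchingCovered (G : SimpleGraph V) : Prop :=
  G.Connected ∧ G.edgeSet.Nonempty ∧
    ∀ e ∈ G.edgeSet, ∃ M : Subgraph G, M.IsPerfectMatching ∧ e ∈ M.edgeSet

/-- An edge `e` of a matching covered graph `G` is removable. -/
def Removable (G : SimpleGraph V) (e : Sym2 V) : Prop :=
  e ∈ G.edgeSet ∧ MatchingCovered (G.deleteEdges {e})

/-- `G` is 3-connected. -/
def ThreeConnected (G : SimpleGraph V) : Prop :=
  4 ≤ Nat.card V ∧ ∀ S : Set V, S.ncard ≤ 2 → (G.induce Sᶜ).Connected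

/-- A brick. -/
def IsBrick (G : SimpleGraph V) : Prop :=
  ThreeConnected G ∧ ∀ x y : V, x ≠ y → HasPM (G.induce ({x, y} : Set V)ᶜ)

/-- neighbours outside `S` of vertices of `S`. -/
def Nbrs (G : SimpleGraph V) (S : Set V) : Set V :=
  {v | v ∉ S ∧ ∃ u ∈ S, G.Adj u v}

/-- factor-critical graph. -/
def FactorCritical (G : SimpleGraph V) : Prop :=
  ∀ v : V, HasPM (G.induce ({v} : Set V)ᶜ)

/-- `(U, W)` is a bipartition of `G`. -/
def IsBipartition (G : SimpleGraph V) (U W : Set V) : Prop :=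
  Disjoint U W ∧ U ∪ W = Set.univ ∧
    ∀ a b : V, G.Adj a b → (a ∈ U ∧ b ∈ W) ∨ (a ∈ W ∧ b ∈ U)

/-! If a barrier `B` of a brick `G` contained two vertices `a ≠ b`, then `G - a - b` would have a
perfect matching, so by the easy half of Tutte's theorem `G - B` would have at most `|B| - 2` odd
components, contradicting `o(G - B) = |B|`. -/

lemma oddComps_eq_ncard_oddComponents (G : SimpleGraph V) :
    oddComps G = G.oddComponents.ncard := by
  simp only [oddComps, oddComponents, ← Nat.card_coe_set_eq, Set.coe_ofPred]

lemma oddComps_congr {W : Type*} {G : SimpleGraph V} {H : SimpleGraph W} (φ : G ≃g H) :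
    oddComps G = oddComps H := by
  refine Nat.card_congr (φ.connectedComponentEquiv.subtypeEquiv fun c => ?_)
  suffices Nat.card c.supp = Nat.card (φ.connectedComponentEquiv c).supp by rw [this]
  refine Nat.card_congr (φ.toEquiv.subtypeEquiv fun v => ?_)
  rw [ConnectedComponent.mem_supp_iff, ConnectedComponent.mem_supp_iff,
    Iso.connectedComponentEquiv_apply, ← ConnectedComponent.iso_inv_image_comp_eq_iff_eq_map]
  simp

def deleteVertsTopIso (G : SimpleGraph V) (u : Set V) :
    ((⊤ : G.Subgraph).deleteVerts u).coe ≃g G.induce uᶜ where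
  toEquiv := Equiv.setCongr (by simp [Set.compl_eq_univ_sdiff])
  map_rel_iff' := by simp +contextual

lemma oddComps_induce_compl_le_of_hasPM [Finite V] {G : SimpleGraph V} (h : HasPM G)
    (u : Set V) : oddComps (G.induce uᶜ) ≤ u.ncard := by
  obtain ⟨M, hM⟩ := h
  rw [← oddComps_congr (deleteVertsTopIso G u), oddComps_eq_ncard_oddComponents]
  exact not_lt.mp (not_isTutteViolator_of_isPerfectMatching hM u)

def induceComplInduceComplIso (G : SimpleGraph V) {S B : Set V} (hSB : S ⊆ B) :
    (G.induce Sᶜ).induce (Subtype.val ⁻¹' B)ᶜ ≃g G.induce Bᶜ where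
  toEquiv := Equiv.subtypeSubtypeEquivSubtype fun hx => Set.compl_subset_compl.mpr hSB hx
  map_rel_iff' := Iff.rfl

lemma oddComps_induce_compl_le_ncard_sub [Finite V] {G : SimpleGraph V} {S B : Set V}
    (hSB : S ⊆ B) (h : HasPM (G.induce Sᶜ)) :
    oddComps (G.induce Bᶜ) ≤ B.ncard - S.ncard := by
  have hu : (Subtype.val ⁻¹' B : Set ↥Sᶜ).ncard = (B \ S).ncard := by
    rw [← Set.ncard_preimage_of_injective_subset_range (f := ((↑) : ↥Sᶜ → V))
      Subtype.val_injective (Subtype.range_coe.symm ▸ Set.sdiff_subset_compl B S)]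
    congr 1
    ext x
    simp
  rw [← oddComps_congr (induceComplInduceComplIso G hSB), ← Set.ncard_sdiff hSB, ← hu]
  exact oddComps_induce_compl_le_of_hasPM h _

/-- every barrier of a brick is a singleton. -/
theorem stmt4 [Fintype V] (G : SimpleGraph V) (hG : IsBrick G)
    (B : Set V) (hBne : B.Nonempty) (hB : IsBarrier G B) :
    ∃ v : V, B = {v} := by
  refine hBne.exists_eq_singleton_or_nontrivial.resolve_right fun ⟨a, ha, b, hb, hab⟩ => ?_
  have hpair : ({a, b} : Set V) ⊆ B := Set.insert_subset ha (Set.singleton_subset_iff.mpr hb)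
  have hle := oddComps_induce_compl_le_ncard_sub hpair (hG.2 a b hab)
  have htwo := Set.ncard_le_ncard hpair
  rw [Set.ncard_pair hab] at hle htwo
  rw [hB] at hle
  omega
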